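/- arXiv:2511.16208 — 4 statements merged into one kernel-verified Lean document; each statement's English description precedes it below -/
import Mathlib

section
/- (Efron–Stein inequality) Let X_1, ..., X_n be independent random variables and let (X_1', ..., X_n') be an independent copy of (X_1, ..., X_n). Then for every measurable function F with F(X_1,...,X_n) square-integrable, Var[F(X_1,...,X_n)] ≤ (1/2) · Σ_{j=1}^n E[(F(X_1,...,X_n) − F(X_1,...,X_{j-1}, X_j', X_{j+1},...,X_n))^2]. -/
/-!
Realise `X` and `X'` on `∏ i, E i × E i` with the law `⨂ i, ν i ⊗ ν i`, and let `Φ S` be `F`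
evaluated at the point that takes the second coordinate on `S` and the first one elsewhere.
Since `Φ ∅` and `Φ univ` are independent copies of `F(X)`, `Var F(X) = E[Φ ∅ (Φ ∅ - Φ univ)]`,
and telescoping along `Iio j` turns this into `∑ j, E[Φ ∅ (Φ (Iio j) - Φ (Iic j))]`.
Swapping the `j`-th pair exchanges `Φ ∅ ↔ Φ {j}` and `Φ (Iio j) ↔ Φ (Iic j)`, so the `j`-th term
is `½ E[(Φ ∅ - Φ {j}) (Φ (Iio j) - Φ (Iic j))]`; swapping the pairs in `Iio j` shows that both
factors have the same `L²` norm, and `2xy ≤ x² + y²` bounds the term by `½ E[(Φ ∅ - Φ {j})²]`.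
-/

open MeasureTheory ProbabilityTheory ENNReal Set

section PiZip

variable {ι : Type*} {α β : ι → Type*} [∀ i, MeasurableSpace (α i)] [∀ i, MeasurableSpace (β i)]

def piZip (p : (∀ i, α i) × (∀ i, β i)) (i : ι) : α i × β i := (p.1 i, p.2 i)

theorem measurable_piZip : Measurable (piZip (α := α) (β := β)) := by
  unfold piZip; fun_prop

theorem measurePreserving_piZip [Fintype ι] (μ : ∀ i, Measure (α i)) (ν : ∀ i, Measure (β i))
    [∀ i, SigmaFinite (μ i)] [∀ i, SigmaFinite (ν i)] :
    MeasurePreserving piZip ((Measure.pi μ).prod (Measure.pi ν))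
      (Measure.pi fun i => (μ i).prod (ν i)) := by
  refine ⟨measurable_piZip, (Measure.pi_eq_generateFrom (fun _ => generateFrom_prod)
    (fun _ => isPiSystem_prod)
    (fun i => (μ i).toFiniteSpanningSetsIn.prod (ν i).toFiniteSpanningSetsIn) ?_).symm⟩
  intro r hr
  choose s hs t ht hst using hr
  have hpre : piZip ⁻¹' univ.pi r = univ.pi s ×ˢ univ.pi t := by
    ext p; simp [piZip, ← hst, Set.mem_pi, forall_and]
  rw [Measure.map_apply measurable_piZip (.univ_pi fun i => hst i ▸ (hs i).prod (ht i)), hpre,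
    Measure.prod_prod, Measure.pi_pi, Measure.pi_pi, ← Finset.prod_mul_distrib]
  simp [← hst, Measure.prod_prod]

end PiZip

theorem MeasureTheory.MeasurePreserving.integral_comp_of_aestronglyMeasurable
    {α β G : Type*} [MeasurableSpace α] [MeasurableSpace β] [NormedAddCommGroup G]
    [NormedSpace ℝ G] {μ : Measure α} {ν : Measure β} {f : α → β} (hf : MeasurePreserving f μ ν)
    {g : β → G} (hg : AEStronglyMeasurable g ν) :
    ∫ x, g (f x) ∂μ = ∫ y, g y ∂ν := by
  rw [← hf.map_eq] at hg ⊢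
  exact (integral_map hf.aemeasurable hg).symm

theorem MeasureTheory.ofReal_integral_le_lintegral_ofReal {α : Type*} [MeasurableSpace α]
    {μ : Measure α} {f : α → ℝ} (hf : 0 ≤ᵐ[μ] f) :
    ENNReal.ofReal (∫ x, f x ∂μ) ≤ ∫⁻ x, ENNReal.ofReal (f x) ∂μ := by
  by_cases hfm : AEStronglyMeasurable f μ
  · rw [integral_eq_lintegral_of_nonneg_ae hf hfm]
    exact ENNReal.ofReal_toReal_le
  · simp [integral_non_aestronglyMeasurable hfm]

theorem integral_mul_sub_le_half_integral_sq_sub {α : Type*} [MeasurableSpace α] {μ : Measure α}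
    {g c a b : α → ℝ} (hg : MemLp g 2 μ) (hc : MemLp c 2 μ) (ha : MemLp a 2 μ) (hb : MemLp b 2 μ)
    (h_anti : ∫ x, c x * (b x - a x) ∂μ = ∫ x, g x * (a x - b x) ∂μ)
    (h_sq : ∫ x, (a x - b x) ^ 2 ∂μ = ∫ x, (g x - c x) ^ 2 ∂μ) :
    ∫ x, g x * (a x - b x) ∂μ ≤ 1 / 2 * ∫ x, (g x - c x) ^ 2 ∂μ := by
  have h_two : 2 * ∫ x, g x * (a x - b x) ∂μ = ∫ x, (g x - c x) * (a x - b x) ∂μ := by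
    have hi₁ : Integrable (fun x => g x * (a x - b x)) μ := hg.integrable_mul (ha.sub hb)
    have hi₂ : Integrable (fun x => c x * (b x - a x)) μ := hc.integrable_mul (hb.sub ha)
    rw [two_mul]
    nth_rewrite 2 [← h_anti]
    rw [← integral_add hi₁ hi₂]
    congr 1 with x
    ring
  have hi₁ : Integrable (fun x => (g x - c x) ^ 2) μ := (hg.sub hc).integrable_sq
  have hi₂ : Integrable (fun x => (a x - b x) ^ 2) μ := (ha.sub hb).integrable_sq
  have h_amgm : ∫ x, (g x - c x) * (a x - b x) ∂μ ≤
      ∫ x, ((g x - c x) ^ 2 + (a x - b x) ^ 2) / 2 ∂μ :=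
    integral_mono ((hg.sub hc).integrable_mul (ha.sub hb)) ((hi₁.add hi₂).div_const 2)
      fun x => by nlinarith [sq_nonneg (g x - c x - (a x - b x))]
  rw [integral_div, integral_add hi₁ hi₂, h_sq] at h_amgm
  linarith

theorem Fin.sum_Iio_sub_Iic {M : Type*} [AddCommGroup M] {n : ℕ} (f : Finset (Fin n) → M) :
    ∑ j, (f (Finset.Iio j) - f (Finset.Iic j)) = f ∅ - f Finset.univ := by
  have h := Finset.sum_range_sub' (fun k => f {i | (i : ℕ) < k}) n
  rw [← Fin.sum_univ_eq_sum_range (fun k => f {i | (i : ℕ) < k} - f {i | (i : ℕ) < k + 1})] at h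
  convert h using 4 <;> ext <;> simp

namespace EfronStein

variable {ι : Type*} [DecidableEq ι] {E : ι → Type*}

def selectOn (s : Finset ι) (w : ∀ i, E i × E i) (i : ι) : E i :=
  if i ∈ s then (w i).2 else (w i).1

def swapOn (s : Finset ι) (w : ∀ i, E i × E i) (i : ι) : E i × E i :=
  if i ∈ s then (w i).swap else w i

theorem selectOn_swapOn (s t : Finset ι) (w : ∀ i, E i × E i) :
    selectOn t (swapOn s w) = selectOn (symmDiff s t) w := by
  funext i
  by_cases hs : i ∈ s <;> by_cases ht : i ∈ t <;>
    simp [selectOn, swapOn, Finset.mem_symmDiff, hs, ht]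

@[simp]
theorem selectOn_empty (w : ∀ i, E i × E i) : selectOn ∅ w = fun i => (w i).1 := by
  funext i; simp [selectOn]

@[simp]
theorem selectOn_univ [Fintype ι] (w : ∀ i, E i × E i) :
    selectOn Finset.univ w = fun i => (w i).2 := by
  funext i; simp [selectOn]

theorem selectOn_singleton (j : ι) (w : ∀ i, E i × E i) :
    selectOn {j} w = Function.update (fun i => (w i).1) j (w j).2 := by
  funext i
  rcases eq_or_ne i j with rfl | h
  · simp [selectOn]
  · simp [selectOn, h]

variable [Fintype ι] [∀ i, MeasurableSpace (E i)]
  (ν : ∀ i, Measure (E i)) [∀ i, IsProbabilityMeasure (ν i)]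

theorem measurePreserving_selectOn (s : Finset ι) :
    MeasurePreserving (selectOn s) (Measure.pi fun i => (ν i).prod (ν i)) (Measure.pi ν) :=
  measurePreserving_pi (f := fun i (x : E i × E i) => if i ∈ s then x.2 else x.1) _ _ fun i => by
    by_cases hi : i ∈ s <;> simp only [hi, if_true, if_false]
    · exact measurePreserving_snd
    · exact measurePreserving_fst

theorem measurePreserving_swapOn (s : Finset ι) :
    MeasurePreserving (swapOn s) (Measure.pi fun i => (ν i).prod (ν i))
      (Measure.pi fun i => (ν i).prod (ν i)) :=
  measurePreserving_pi (f := fun i (x : E i × E i) => if i ∈ s then x.swap else x) _ _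
    fun i => by
      by_cases hi : i ∈ s <;> simp only [hi, if_true, if_false]
      · exact Measure.measurePreserving_swap
      · exact .id _

theorem integral_comp_swapOn (s : Finset ι) {g : (∀ i, E i × E i) → ℝ}
    (hg : AEStronglyMeasurable g (Measure.pi fun i => (ν i).prod (ν i))) :
    ∫ w, g (swapOn s w) ∂(Measure.pi fun i => (ν i).prod (ν i)) =
      ∫ w, g w ∂(Measure.pi fun i => (ν i).prod (ν i)) :=
  (measurePreserving_swapOn ν s).integral_comp_of_aestronglyMeasurable hg

variable {ν} {F : (∀ i, E i) → ℝ}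

theorem memLp_comp_selectOn (hF : MemLp F 2 (Measure.pi ν)) (s : Finset ι) :
    MemLp (fun w => F (selectOn s w)) 2 (Measure.pi fun i => (ν i).prod (ν i)) :=
  hF.comp_measurePreserving (measurePreserving_selectOn ν s)

theorem integral_mul_sub_selectOn_insert_le (hF : MemLp F 2 (Measure.pi ν)) {j : ι}
    {H : Finset ι} (hj : j ∉ H) :
    ∫ w, F (selectOn ∅ w) * (F (selectOn H w) - F (selectOn (insert j H) w))
        ∂(Measure.pi fun i => (ν i).prod (ν i)) ≤
      1 / 2 * ∫ w, (F (selectOn ∅ w) - F (selectOn {j} w)) ^ 2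
        ∂(Measure.pi fun i => (ν i).prod (ν i)) := by
  have hΦ := memLp_comp_selectOn hF
  have hΦm s := (hΦ s).aestronglyMeasurable
  refine integral_mul_sub_le_half_integral_sq_sub (hΦ ∅) (hΦ {j}) (hΦ H) (hΦ (insert j H)) ?_ ?_
  · refine Eq.trans ?_ (integral_comp_swapOn ν {j}
      ((hΦm ∅).mul ((hΦm H).sub (hΦm (insert j H)))))
    have h₁ : symmDiff {j} H = insert j H := by ext; simp [Finset.mem_symmDiff]; grind
    have h₂ : symmDiff {j} (insert j H) = H := by ext; simp [Finset.mem_symmDiff]; grind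
    simp only [selectOn_swapOn, ← Finset.bot_eq_empty, symmDiff_bot, h₁, h₂]
  · refine Eq.trans ?_ (integral_comp_swapOn ν H (((hΦm ∅).sub (hΦm {j})).pow 2))
    have h₃ : symmDiff H {j} = insert j H := by ext; simp [Finset.mem_symmDiff]; grind
    simp only [selectOn_swapOn, ← Finset.bot_eq_empty, symmDiff_bot, h₃]

theorem variance_eq_integral_mul_sub_selectOn_univ (hF : MemLp F 2 (Measure.pi ν)) :
    Var[F; Measure.pi ν] =
      ∫ w, F (selectOn ∅ w) * (F (selectOn ∅ w) - F (selectOn Finset.univ w))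
        ∂(Measure.pi fun i => (ν i).prod (ν i)) := by
  have hΦ := memLp_comp_selectOn hF
  have h_sq : ∫ w, F (selectOn ∅ w) ^ 2 ∂(Measure.pi fun i => (ν i).prod (ν i)) =
      ∫ x, F x ^ 2 ∂Measure.pi ν :=
    (measurePreserving_selectOn ν ∅).integral_comp_of_aestronglyMeasurable
      (hF.aestronglyMeasurable.pow 2)
  have h_indep : ∫ w, F (selectOn ∅ w) * F (selectOn Finset.univ w)
      ∂(Measure.pi fun i => (ν i).prod (ν i)) = (∫ x, F x ∂Measure.pi ν) ^ 2 := by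
    rw [← (measurePreserving_piZip ν ν).integral_comp_of_aestronglyMeasurable
      (g := fun w => F (selectOn ∅ w) * F (selectOn Finset.univ w))
      ((hΦ ∅).aestronglyMeasurable.mul (hΦ _).aestronglyMeasurable), sq, ← integral_prod_mul F F]
    simp only [selectOn_empty, selectOn_univ, piZip]
  have hi₁ : Integrable (fun w => F (selectOn ∅ w) ^ 2) (Measure.pi fun i => (ν i).prod (ν i)) :=
    (hΦ ∅).integrable_sq
  have hi₂ : Integrable (fun w => F (selectOn ∅ w) * F (selectOn Finset.univ w))
      (Measure.pi fun i => (ν i).prod (ν i)) := (hΦ ∅).integrable_mul (hΦ _)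
  simp_rw [mul_sub, ← sq]
  rw [variance_eq_sub hF, integral_sub hi₁ hi₂, h_indep, h_sq]
  rfl

end EfronStein

open EfronStein in
theorem variance_pi_le_half_sum_integral_sq_sub_update {n : ℕ} {E : Fin n → Type*}
    [∀ i, MeasurableSpace (E i)] (ν : ∀ i, Measure (E i)) [∀ i, IsProbabilityMeasure (ν i)]
    {F : (∀ i, E i) → ℝ} (hF : MemLp F 2 (Measure.pi ν)) :
    Var[F; Measure.pi ν] ≤ 1 / 2 * ∑ j, ∫ p, (F p.1 - F (Function.update p.1 j (p.2 j))) ^ 2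
      ∂(Measure.pi ν).prod (Measure.pi ν) := by
  have hΦ := memLp_comp_selectOn hF
  calc Var[F; Measure.pi ν]
      = ∑ j, ∫ w, F (selectOn ∅ w) *
          (F (selectOn (Finset.Iio j) w) - F (selectOn (Finset.Iic j) w))
          ∂(Measure.pi fun i => (ν i).prod (ν i)) := by
        rw [variance_eq_integral_mul_sub_selectOn_univ hF, ← integral_finsetSum _ fun j _ => ?_]
        · congr with w
          rw [← Finset.mul_sum, Fin.sum_Iio_sub_Iic fun s => F (selectOn s w)]
        · exact (hΦ ∅).integrable_mul ((hΦ _).sub (hΦ _))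
    _ ≤ ∑ j, 1 / 2 * ∫ w, (F (selectOn ∅ w) - F (selectOn {j} w)) ^ 2
          ∂(Measure.pi fun i => (ν i).prod (ν i)) := by
        gcongr with j
        rw [← Finset.Iio_insert]
        exact integral_mul_sub_selectOn_insert_le hF Finset.notMem_Iio_self
    _ = _ := by
        rw [Finset.mul_sum]
        congr! 2 with j
        rw [← (measurePreserving_piZip ν ν).integral_comp_of_aestronglyMeasurable]
        · simp only [selectOn_empty, selectOn_singleton, piZip]
        · exact ((hΦ ∅).aestronglyMeasurable.sub (hΦ {j}).aestronglyMeasurable).pow 2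

theorem measurePreserving_prodMk_pi_map {Ω : Type*} [MeasurableSpace Ω] {μ : Measure Ω}
    [IsProbabilityMeasure μ] {ι : Type*} [Fintype ι] {E : ι → Type*}
    [∀ i, MeasurableSpace (E i)] {X X' : ∀ i, Ω → E i}
    (hXmeas : ∀ i, Measurable (X i)) (hX'meas : ∀ i, Measurable (X' i))
    (hindep : iIndepFun X μ)
    (hindep' : IndepFun (fun ω i => X i ω) (fun ω i => X' i ω) μ)
    (hid : IdentDistrib (fun ω i => X i ω) (fun ω i => X' i ω) μ μ) :
    MeasurePreserving (fun ω => ((fun i => X i ω), fun i => X' i ω)) μ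
      ((Measure.pi fun i => μ.map (X i)).prod (Measure.pi fun i => μ.map (X i))) := by
  have hX : μ.map (fun ω i => X i ω) = Measure.pi fun i => μ.map (X i) :=
    hindep.map_fun_eq_pi_map fun i => (hXmeas i).aemeasurable
  have hvec := measurable_pi_lambda _ hXmeas
  have hvec' := measurable_pi_lambda _ hX'meas
  refine ⟨hvec.prodMk hvec', ?_⟩
  rw [(indepFun_iff_map_prod_eq_prod_map_map hvec.aemeasurable hvec'.aemeasurable).1 hindep',
    ← hid.map_eq, hX]

/-- Efron–Stein inequality: for independent `X_1, ..., X_n`, an independent copy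
`(X_1', ..., X_n')`, and a measurable `F` with `F(X)` square-integrable,
`Var[F(X)] ≤ (1/2) Σ_j E[(F(X) − F(X^{(j)}))²]`, where `X^{(j)}` replaces the `j`-th
coordinate of `X` by `X_j'`. -/
theorem stmt1 {Ω : Type*} [MeasurableSpace Ω] (μ : Measure Ω) [IsProbabilityMeasure μ]
    {n : ℕ} {E : Fin n → Type*} [∀ i, MeasurableSpace (E i)]
    (X X' : ∀ i, Ω → E i)
    (hXmeas : ∀ i, Measurable (X i)) (hX'meas : ∀ i, Measurable (X' i))
    (hindep : iIndepFun X μ)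
    (hindep' : IndepFun (fun ω i => X i ω) (fun ω i => X' i ω) μ)
    (hid : IdentDistrib (fun ω i => X i ω) (fun ω i => X' i ω) μ μ)
    (F : (∀ i, E i) → ℝ) (hF : Measurable F)
    (hL2 : MemLp (fun ω => F (fun i => X i ω)) 2 μ) :
    ENNReal.ofReal (variance (fun ω => F (fun i => X i ω)) μ) ≤
      (1 / 2 : ℝ≥0∞) * ∑ j : Fin n, ∫⁻ ω,
        ENNReal.ofReal ((F (fun i => X i ω) -
          F (Function.update (fun i => X i ω) j (X' j ω))) ^ 2) ∂μ := by
  have _ i : IsProbabilityMeasure (μ.map (X i)) :=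
    Measure.isProbabilityMeasure_map (hXmeas i).aemeasurable
  have hlaw := measurePreserving_prodMk_pi_map hXmeas hX'meas hindep hindep' hid
  have hX := measurePreserving_fst.comp hlaw
  set P := Measure.pi fun i => μ.map (X i)
  have hF2 : MemLp F 2 P := by
    rwa [← hX.map_eq, memLp_map_measure_iff hF.aestronglyMeasurable hX.aemeasurable]
  calc ENNReal.ofReal (variance (fun ω => F (fun i => X i ω)) μ)
      = ENNReal.ofReal Var[F; P] := by rw [← hX.variance_fun_comp hF.aemeasurable]; rfl
    _ ≤ ENNReal.ofReal
          (1 / 2 * ∑ j, ∫ p, (F p.1 - F (Function.update p.1 j (p.2 j))) ^ 2 ∂P.prod P) :=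
        ENNReal.ofReal_le_ofReal (variance_pi_le_half_sum_integral_sq_sub_update _ hF2)
    _ ≤ 1 / 2 * ∑ j, ∫⁻ p, ENNReal.ofReal ((F p.1 - F (Function.update p.1 j (p.2 j))) ^ 2)
          ∂P.prod P := by
        rw [ENNReal.ofReal_mul (by norm_num), ENNReal.ofReal_div_of_pos two_pos,
          ENNReal.ofReal_one, ENNReal.ofReal_ofNat,
          ENNReal.ofReal_sum_of_nonneg fun j _ => integral_nonneg fun _ => sq_nonneg _]
        gcongr with j
        exact ofReal_integral_le_lintegral_ofReal (ae_of_all _ fun _ => sq_nonneg _)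
    _ = _ := by
        congr! 2 with j
        exact (hlaw.lintegral_comp (by fun_prop)).symm
end

section
/- There is a universal constant k > 0 with the following property: for every nonempty connected compact set K ⊂ ℝ², every r > 0 with diam(K) ≥ r, and every ε ∈ (0, 1), the Lebesgue measure of the ε r-neighborhood of K satisfies Leb(B_{εr}(K)) ≥ k · ε · Leb(B_r(K)). -/
/-!
Take a finite maximal `r`-separated set `N ⊆ K`. It is an `r`-cover, so `B_r(K)` is covered by
the balls `B(x, 2r)`, `x ∈ N`, and `Leb(B_r(K)) ≤ |N| π (2r)²`. Conversely, since `diam K ≥ r`,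
every `x ∈ N` has a point of `K` at distance `≥ r/2`, so by connectedness `K` meets each sphere
about `x` of radius `< r/2`. With `t = εr/10` and `m = ⌈1/ε⌉`, the spheres of radii `2tj`,
`j < m`, give `m` disjoint `t`-balls in `B_t(K) ∩ B(x, r/2)`, and the balls `B(x, r/2)` are
disjoint for distinct `x ∈ N`. Hence `Leb(B_{εr}(K)) ≥ |N| m π t² ≥ |N| π ε r² / 100`.
-/

open Metric MeasureTheory
open scoped NNReal ENNReal

section MetricSpace

variable {X : Type*} [PseudoMetricSpace X]

theorem IsPreconnected.exists_mem_dist_eq {K : Set X} (hK : IsPreconnected K) {x y : X}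
    (hx : x ∈ K) (hy : y ∈ K) {s : ℝ} (hs₀ : 0 ≤ s) (hs : s ≤ dist y x) :
    ∃ z ∈ K, dist z x = s :=
  hK.intermediate_value hx hy (continuous_id.dist continuous_const).continuousOn
    ⟨by simpa using hs₀, hs⟩

theorem IsCompact.exists_mem_diam_le_two_mul_dist {K : Set X} (hK : IsCompact K)
    (hne : K.Nonempty) (x : X) : ∃ y ∈ K, diam K ≤ 2 * dist y x := by
  obtain ⟨y, hy, hmax⟩ :=
    hK.exists_isMaxOn hne (f := (dist · x)) (continuous_id.dist continuous_const).continuousOn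
  refine ⟨y, hy, diam_le_of_forall_dist_le (by positivity) fun p hp q hq => ?_⟩
  calc dist p q ≤ dist p x + dist q x := dist_triangle_right p q x
    _ ≤ 2 * dist y x := by linarith [isMaxOn_iff.1 hmax p hp, isMaxOn_iff.1 hmax q hq]

theorem Metric.IsSeparated.lt_dist {δ : ℝ≥0} {N : Set X} (hN : IsSeparated δ N) {x y : X}
    (hx : x ∈ N) (hy : y ∈ N) (hxy : x ≠ y) : (δ : ℝ) < dist x y := by
  have : (δ : ℝ≥0∞) < edist x y := hN hx hy hxy
  rwa [edist_nndist, ENNReal.coe_lt_coe, ← NNReal.coe_lt_coe, coe_nndist] at this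

theorem Metric.IsCover.exists_dist_le {δ : ℝ≥0} {K N : Set X} (hN : IsCover δ K N) {p : X}
    (hp : p ∈ K) : ∃ x ∈ N, dist p x ≤ δ := by
  simpa using isCover_iff_subset_iUnion_closedBall.1 hN hp

end MetricSpace

theorem IsCompact.exists_finset_isSeparated_isCover {X : Type*} [PseudoEMetricSpace X]
    {K : Set X} (hK : IsCompact K) {δ : ℝ≥0} (hδ : δ ≠ 0) :
    ∃ N : Finset X, ↑N ⊆ K ∧ IsSeparated δ (N : Set X) ∧ IsCover δ K N := by
  obtain ⟨C, -, hCfin, hC⟩ :=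
    exists_finite_isCover_of_isCompact (ε := δ / 2) (by simpa using hδ) hK
  have hpack : packingNumber δ K ≠ ⊤ := by
    refine ne_top_of_le_ne_top (Set.encard_ne_top_iff.2 hCfin) ?_
    calc packingNumber δ K = packingNumber (2 * (δ / 2)) K := by
          rw [mul_div_cancel₀ _ two_ne_zero]
      _ ≤ externalCoveringNumber (δ / 2) K := packingNumber_two_mul_le_externalCoveringNumber _ _
      _ ≤ C.encard := hC.externalCoveringNumber_le_encard
  have hfin : (maximalSeparatedSet δ K).Finite := by
    rw [← Set.encard_ne_top_iff, encard_maximalSeparatedSet hpack]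
    exact hpack
  exact ⟨hfin.toFinset, by simpa using maximalSeparatedSet_subset,
    by simpa using isSeparated_maximalSeparatedSet,
    by simpa using isCover_maximalSeparatedSet hpack⟩

section MetricMeasureSpace

variable {X : Type*} [PseudoMetricSpace X] [MeasurableSpace X] (μ : Measure X)

theorem sum_measure_inter_ball_le [OpensMeasurableSpace X] {N : Finset X} {δ : ℝ≥0}
    (hN : IsSeparated δ (N : Set X)) {S : Set X} (hS : MeasurableSet S) :
    ∑ x ∈ N, μ (S ∩ ball x (δ / 2)) ≤ μ S := by
  rw [← measure_biUnion_finset ?_ fun x _ => hS.inter measurableSet_ball]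
  · exact measure_mono (Set.iUnion₂_subset fun x _ => Set.inter_subset_left)
  · intro x hx y hy hxy
    exact (ball_disjoint_ball (by linarith [hN.lt_dist hx hy hxy])).mono
      Set.inter_subset_right Set.inter_subset_right

theorem measure_thickening_le_sum_measure_ball {K : Set X} {N : Finset X} {δ : ℝ≥0}
    (hN : IsCover δ K (N : Set X)) (r : ℝ) :
    μ (thickening r K) ≤ ∑ x ∈ N, μ (ball x (δ + r)) := by
  refine (measure_mono fun w hw => ?_).trans (measure_biUnion_finset_le N _)
  obtain ⟨p, hp, hwp⟩ := mem_thickening_iff.1 hw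
  obtain ⟨x, hx, hpx⟩ := hN.exists_dist_le hp
  refine Set.mem_iUnion₂.2 ⟨x, hx, ?_⟩
  rw [mem_ball]
  linarith [dist_triangle w p x]

end MetricMeasureSpace

section AddHaar

variable {E : Type*} [NormedAddCommGroup E] [MeasurableSpace E] [BorelSpace E]
  (μ : Measure E) [μ.IsAddHaarMeasure]

theorem natCast_mul_measure_ball_le_measure_thickening_inter_ball {K : Set E}
    (hK : IsPreconnected K) {x y : E} (hx : x ∈ K) (hy : y ∈ K) {t : ℝ} (ht : 0 ≤ t) {m : ℕ}
    (hm : 2 * t * m ≤ dist y x) :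
    m * μ (ball 0 t) ≤ μ (thickening t K ∩ ball x (2 * t * m)) := by
  have hsphere : ∀ j ∈ Finset.range m, ∃ z ∈ K, dist z x = 2 * t * j := fun j hj =>
    hK.exists_mem_dist_eq hx hy (by positivity) <|
      (by gcongr; exact_mod_cast (Finset.mem_range.1 hj).le : 2 * t * j ≤ 2 * t * m).trans hm
  choose! z hzK hzx using hsphere
  have hdisj : (Finset.range m : Set ℕ).PairwiseDisjoint fun j => ball (z j) t := by
    intro i hi j hj hij
    refine ball_disjoint_ball ?_
    have hij' : (1 : ℝ) ≤ |(i : ℝ) - j| := by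
      have : (1 : ℤ) ≤ |(i : ℤ) - j| := Int.one_le_abs (sub_ne_zero.2 (by exact_mod_cast hij))
      exact_mod_cast this
    calc t + t = 2 * t * 1 := by ring
      _ ≤ 2 * t * |(i : ℝ) - j| := by gcongr
      _ = |dist (z i) x - dist (z j) x| := by
        rw [hzx i hi, hzx j hj, ← mul_sub, abs_mul, abs_of_nonneg (by positivity : 0 ≤ 2 * t)]
      _ ≤ dist (z i) (z j) := abs_dist_sub_le _ _ _
  have hsub : ∀ j ∈ Finset.range m, ball (z j) t ⊆ thickening t K ∩ ball x (2 * t * m) := by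
    intro j hj w hw
    refine ⟨ball_subset_thickening (hzK j hj) t hw, ?_⟩
    have hjm : (j : ℝ) + 1 ≤ m := by exact_mod_cast Finset.mem_range.1 hj
    rw [mem_ball] at hw ⊢
    calc dist w x ≤ dist w (z j) + dist (z j) x := dist_triangle _ _ _
      _ < t + 2 * t * j := by rw [hzx j hj]; linarith
      _ ≤ 2 * t * m := by nlinarith
  calc (m : ℝ≥0∞) * μ (ball 0 t) = ∑ j ∈ Finset.range m, μ (ball (z j) t) := by
        simp [Measure.addHaar_ball_center]
    _ = μ (⋃ j ∈ Finset.range m, ball (z j) t) :=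
        (measure_biUnion_finset hdisj fun _ _ => measurableSet_ball).symm
    _ ≤ μ (thickening t K ∩ ball x (2 * t * m)) := measure_mono (Set.iUnion₂_subset hsub)

theorem card_mul_measure_ball_le_measure_thickening {K : Set E} (hKc : IsCompact K)
    (hK : IsPreconnected K) {N : Finset E} (hNK : ↑N ⊆ K) {δ : ℝ≥0}
    (hN : IsSeparated δ (N : Set E)) (hδ : (δ : ℝ) ≤ diam K) {t : ℝ} (ht : 0 ≤ t) {m : ℕ}
    (hm : 4 * t * m ≤ δ) :
    N.card * (m * μ (ball 0 t)) ≤ μ (thickening t K) := by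
  calc (N.card : ℝ≥0∞) * (m * μ (ball 0 t)) = ∑ x ∈ N, m * μ (ball 0 t) := by simp
    _ ≤ ∑ x ∈ N, μ (thickening t K ∩ ball x (δ / 2)) := Finset.sum_le_sum fun x hx => by
        obtain ⟨y, hy, hdiam⟩ := hKc.exists_mem_diam_le_two_mul_dist ⟨x, hNK hx⟩ x
        refine (natCast_mul_measure_ball_le_measure_thickening_inter_ball μ hK (hNK hx) hy ht
          (by linarith)).trans (measure_mono (Set.inter_subset_inter_right _ ?_))
        exact ball_subset_ball (by linarith)
    _ ≤ μ (thickening t K) := sum_measure_inter_ball_le μ hN isOpen_thickening.measurableSet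

theorem measure_thickening_le_card_mul_measure_ball {K : Set E} {N : Finset E} {δ : ℝ≥0}
    (hN : IsCover δ K (N : Set E)) (r : ℝ) :
    μ (thickening r K) ≤ N.card * μ (ball 0 (δ + r)) :=
  (measure_thickening_le_sum_measure_ball μ hN r).trans (by simp [Measure.addHaar_ball_center])

end AddHaar

theorem one_le_natCeil_inv_mul_and_lt {ε : ℝ} (hε : 0 < ε) :
    1 ≤ ⌈ε⁻¹⌉₊ * ε ∧ ⌈ε⁻¹⌉₊ * ε < 1 + ε := by
  constructor
  · simpa [hε.ne'] using mul_le_mul_of_nonneg_right (Nat.le_ceil ε⁻¹) hε.le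
  · simpa [add_mul, hε.ne'] using
      mul_lt_mul_of_pos_right (Nat.ceil_lt_add_one (inv_nonneg.2 hε.le)) hε

/-- There is a universal constant `k > 0` such that for every nonempty connected compact
`K ⊂ ℝ²`, every `r > 0` with `diam K ≥ r`, and every `ε ∈ (0,1)`,
`Leb(B_{εr}(K)) ≥ k · ε · Leb(B_r(K))`. -/
theorem stmt3 :
    ∃ k : ℝ, 0 < k ∧
      ∀ K : Set (EuclideanSpace ℝ (Fin 2)), K.Nonempty → IsCompact K → IsConnected K →
        ∀ r : ℝ, 0 < r → r ≤ diam K →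
          ∀ ε : ℝ, ε ∈ Set.Ioo (0 : ℝ) 1 →
            ENNReal.ofReal (k * ε) * volume (thickening r K) ≤
              volume (thickening (ε * r) K) := by
  refine ⟨1 / 400, by norm_num, ?_⟩
  intro K _ hKc hKconn r hr hrd ε ⟨hε0, hε1⟩
  obtain ⟨N, hNK, hNsep, hNcov⟩ :=
    hKc.exists_finset_isSeparated_isCover (δ := r.toNNReal) (by simpa using hr)
  have hδ : (r.toNNReal : ℝ) = r := Real.coe_toNNReal r hr.le
  set m := ⌈ε⁻¹⌉₊
  obtain ⟨hmε, hmε'⟩ := one_le_natCeil_inv_mul_and_lt hε0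
  have hlow := card_mul_measure_ball_le_measure_thickening volume hKc hKconn.isPreconnected hNK
    hNsep (by rwa [hδ]) (t := ε * r / 10) (by positivity) (m := m) (by rw [hδ]; nlinarith)
  have hup := measure_thickening_le_card_mul_measure_ball volume hNcov r
  rw [hδ] at hup
  simp only [EuclideanSpace.volume_ball_fin_two] at hlow hup
  have hradii : ENNReal.ofReal (1 / 400 * ε) * ENNReal.ofReal (r + r) ^ 2 ≤
      m * ENNReal.ofReal (ε * r / 10) ^ 2 := by
    rw [← ENNReal.ofReal_pow (by positivity), ← ENNReal.ofReal_pow (by positivity),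
      ← ENNReal.ofReal_mul (by positivity), ← ENNReal.ofReal_natCast,
      ← ENNReal.ofReal_mul (by positivity)]
    exact ENNReal.ofReal_le_ofReal (by nlinarith)
  calc ENNReal.ofReal (1 / 400 * ε) * volume (thickening r K)
      ≤ ENNReal.ofReal (1 / 400 * ε) *
          (N.card * (ENNReal.ofReal (r + r) ^ 2 * ENNReal.ofReal Real.pi)) := by gcongr
    _ = N.card * ((ENNReal.ofReal (1 / 400 * ε) * ENNReal.ofReal (r + r) ^ 2) *
          ENNReal.ofReal Real.pi) := by ring
    _ ≤ N.card * (m * ENNReal.ofReal (ε * r / 10) ^ 2 * ENNReal.ofReal Real.pi) := by gcongr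
    _ = N.card * (m * (ENNReal.ofReal (ε * r / 10) ^ 2 * ENNReal.ofReal Real.pi)) := by ring
    _ ≤ volume (thickening (ε * r / 10) K) := hlow
    _ ≤ volume (thickening (ε * r) K) := measure_mono (thickening_mono (by nlinarith) K)
end

section
/- Fix n ∈ ℕ. Let F be a family of pairs (X, f), where X ⊂ ℝⁿ is a nonempty compact set and f : X → ℝ is continuous, such that: (1) for each ε > 0 there exists δ > 0 such that for every (X, f) ∈ F and all x, y ∈ X with ‖x − y‖ < δ one has |f(x) − f(y)| < ε; and (2) there exists C > 0 such that X ⊂ B_C(0) and sup_{x ∈ X} |f(x)| ≤ C for all (X, f) ∈ F. Then the closure of F in the metric space HausUniₙ is compact. -/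
open TopologicalSpace Metric

/-- A nonempty compact subset of `ℝⁿ × ℝ` which is the graph of a continuous real-valued
function on a nonempty compact subset of `ℝⁿ`. Identifying a pair `(X, f)` with its graph,
the Hausdorff distance between graphs (for the max product metric on `ℝⁿ × ℝ`) is exactly
the `HausUniₙ` distance of the statement. -/
def IsGraph {n : ℕ} (K : Set (EuclideanSpace ℝ (Fin n) × ℝ)) : Prop :=
  ∃ (X : Set (EuclideanSpace ℝ (Fin n))) (f : EuclideanSpace ℝ (Fin n) → ℝ),
    X.Nonempty ∧ IsCompact X ∧ ContinuousOn f X ∧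
      K = {p : EuclideanSpace ℝ (Fin n) × ℝ | p.1 ∈ X ∧ p.2 = f p.1}

/-- The space `HausUniₙ` of pairs `(X, f)`, `X ⊆ ℝⁿ` nonempty compact, `f : X → ℝ`
continuous, realized as the space of graphs with the Hausdorff metric. -/
def HausUni (n : ℕ) : Type :=
  {K : NonemptyCompacts (EuclideanSpace ℝ (Fin n) × ℝ) //
    IsGraph (K : Set (EuclideanSpace ℝ (Fin n) × ℝ))}

noncomputable instance (n : ℕ) : MetricSpace (HausUni n) :=
  Subtype.metricSpace

/-!
`HausUniₙ` sits isometrically in the hyperspace of nonempty compact subsets of `ℝⁿ × ℝ`. The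
graphs of `F` lie in the hyperspace of the compact box `closedBall 0 C × [-C, C]`, which is
compact. Equicontinuity says `K ×ˢ K ⊆ R` for closed relations `R`, so it passes to Hausdorff
limits; and a set satisfying it has one point over each `x` and is the graph of a uniformly
continuous function. So the closure of `F` in the hyperspace stays inside `HausUniₙ`.
-/

section Modulus

variable {α β : Type*}

def modulusRel [PseudoMetricSpace α] [PseudoMetricSpace β] (δ ε : ℝ) :
    Set ((α × β) × (α × β)) :=
  {pq | dist pq.1.1 pq.2.1 < δ → dist pq.1.2 pq.2.2 ≤ ε}

theorem isClosed_modulusRel [PseudoMetricSpace α] [PseudoMetricSpace β] (δ ε : ℝ) :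
    IsClosed (modulusRel (α := α) (β := β) δ ε) := by
  simp only [modulusRel, imp_iff_not_or, not_lt, Set.ofPred_or]
  exact (isClosed_le continuous_const (by fun_prop)).union
    (isClosed_le (by fun_prop) continuous_const)

theorem TopologicalSpace.NonemptyCompacts.isClosed_setOf_prod_self_subset [TopologicalSpace α]
    {R : Set (α × α)} (hR : IsClosed R) :
    IsClosed {K : NonemptyCompacts α | (K : Set α) ×ˢ (K : Set α) ⊆ R} :=
  (NonemptyCompacts.isClosed_subsets_of_isClosed hR).preimage
    (NonemptyCompacts.continuous_prod.comp (continuous_id.prodMk continuous_id))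

variable [PseudoMetricSpace α] [MetricSpace β] {K : Set (α × β)}

theorem injOn_fst_of_forall_modulusRel
    (hK : ∀ ε > 0, ∃ δ > 0, K ×ˢ K ⊆ modulusRel δ ε) : K.InjOn Prod.fst := by
  intro p hp q hq hpq
  refine Prod.ext hpq (eq_of_forall_dist_le fun ε hε => ?_)
  obtain ⟨δ, hδ, hKδ⟩ := hK ε hε
  exact hKδ (Set.mk_mem_prod hp hq) (by simpa [hpq] using hδ)

theorem exists_uniformContinuousOn_eq_graph_of_forall_modulusRel [Nonempty β]
    (hK : ∀ ε > 0, ∃ δ > 0, K ×ˢ K ⊆ modulusRel δ ε) :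
    ∃ f : α → β, UniformContinuousOn f (Prod.fst '' K) ∧
      K = {p | p.1 ∈ Prod.fst '' K ∧ p.2 = f p.1} := by
  set f : α → β := fun x => Classical.epsilon fun y => (x, y) ∈ K
  have hf : ∀ x ∈ Prod.fst '' K, (x, f x) ∈ K := by
    rintro _ ⟨p, hp, rfl⟩
    exact Classical.epsilon_spec (p := fun y => (p.1, y) ∈ K) ⟨p.2, hp⟩
  refine ⟨f, ?_, ?_⟩
  · refine (uniformity_basis_dist.uniformContinuousOn_iff uniformity_basis_dist_le).2
      fun ε hε => ?_
    obtain ⟨δ, hδ, hKδ⟩ := hK ε hε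
    exact ⟨δ, hδ, fun x hx y hy hxy => hKδ (Set.mk_mem_prod (hf x hx) (hf y hy)) hxy⟩
  · ext p
    refine ⟨fun hp => ⟨⟨p, hp, rfl⟩, ?_⟩, fun ⟨hp, hpf⟩ => ?_⟩
    · exact congrArg Prod.snd
        (injOn_fst_of_forall_modulusRel hK hp (hf p.1 ⟨p, hp, rfl⟩) rfl)
    · simpa [← hpf] using hf p.1 hp

end Modulus

theorem isGraph_of_forall_modulusRel {n : ℕ}
    (K : NonemptyCompacts (EuclideanSpace ℝ (Fin n) × ℝ))
    (hK : ∀ ε > 0, ∃ δ > 0,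
      (K : Set (EuclideanSpace ℝ (Fin n) × ℝ)) ×ˢ (K : Set _) ⊆ modulusRel δ ε) :
    IsGraph (K : Set (EuclideanSpace ℝ (Fin n) × ℝ)) := by
  obtain ⟨f, hf, hKf⟩ := exists_uniformContinuousOn_eq_graph_of_forall_modulusRel hK
  exact ⟨_, f, K.nonempty.image _, K.isCompact.image continuous_fst, hf.continuousOn, hKf⟩

theorem HausUni.isEmbedding_val (n : ℕ) :
    Topology.IsEmbedding (X := HausUni n) Subtype.val :=
  Isometry.isEmbedding fun _ _ => rfl

/-- Arzelà–Ascoli type criterion: a uniformly equicontinuous, uniformly bounded family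
in `HausUniₙ` whose sets lie in a fixed ball has compact closure. -/
theorem stmt5 {n : ℕ} (F : Set (HausUni n))
    (hequi : ∀ ε : ℝ, 0 < ε → ∃ δ : ℝ, 0 < δ ∧ ∀ Kf ∈ F,
      ∀ p ∈ (Kf.1 : Set (EuclideanSpace ℝ (Fin n) × ℝ)),
        ∀ q ∈ (Kf.1 : Set (EuclideanSpace ℝ (Fin n) × ℝ)),
          ‖p.1 - q.1‖ < δ → |p.2 - q.2| < ε)
    (hbdd : ∃ C : ℝ, 0 < C ∧ ∀ Kf ∈ F,
      ∀ p ∈ (Kf.1 : Set (EuclideanSpace ℝ (Fin n) × ℝ)), ‖p.1‖ < C ∧ |p.2| ≤ C) :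
    IsCompact (closure F) := by
  obtain ⟨C, -, hC⟩ := hbdd
  have hcompact : IsCompact (closure (Subtype.val '' F)) := by
    refine (NonemptyCompacts.isCompact_subsets_of_isCompact
      ((isCompact_closedBall 0 C).prod (isCompact_Icc (a := -C) (b := C)))).closure_of_subset ?_
    rintro _ ⟨Kf, hKf, rfl⟩ p hp
    obtain ⟨h1, h2⟩ := hC Kf hKf p hp
    exact ⟨mem_closedBall_zero_iff.2 h1.le, abs_le.1 h2⟩
  have hmodulus : ∀ K ∈ closure (Subtype.val '' F), ∀ ε > 0, ∃ δ > 0,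
      (K : Set (EuclideanSpace ℝ (Fin n) × ℝ)) ×ˢ (K : Set _) ⊆ modulusRel δ ε := by
    intro K hK ε hε
    obtain ⟨δ, hδ, hF⟩ := hequi ε hε
    refine ⟨δ, hδ, closure_minimal ?_
      (NonemptyCompacts.isClosed_setOf_prod_self_subset (isClosed_modulusRel δ ε)) hK⟩
    rintro _ ⟨Kf, hKf, rfl⟩ ⟨p, q⟩ ⟨hp, hq⟩ hpq
    rw [dist_eq_norm] at hpq
    exact (Real.dist_eq _ _ ▸ hF Kf hKf p hp q hq hpq).le
  have hrange : closure (Subtype.val '' F) ⊆ Set.range Subtype.val := fun K hK =>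
    ⟨⟨K, isGraph_of_forall_modulusRel K (hmodulus K hK)⟩, rfl⟩
  rw [(HausUni.isEmbedding_val n).closure_eq_preimage_closure_image]
  exact ((HausUni.isEmbedding_val n).isInducing.isCompact_preimage_iff hrange).2 hcompact
end

section
/- Let (X_k)_{k∈ℕ} be real random variables, (b_k)_{k∈ℕ} positive reals, and suppose X_k / b_k converges in distribution to a random variable X with P(0 < X < ∞) = 1. For each k let a_k be a median of X_k, i.e. P(X_k ≥ a_k) ≥ 1/2 and P(X_k ≤ a_k) ≥ 1/2. Then there exist constants 0 < c ≤ C < ∞ and k_0 such that c ≤ a_k / b_k ≤ C for all k ≥ k_0. -/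
/-!
The laws of `X k / b k` converge weakly to a law `ν` with `ν (-∞, 0] = 0`. Choose `c > 0` with
`ν (-∞, c] < 1/2` and `C` with `ν [C, ∞) < 1/2`. By the portmanteau theorem (closed sets) the same
strict inequalities hold for the laws of `X k / b k` once `k` is large, and a median `a k / b k` of
such a law can then lie neither below `c` nor above `C`.
-/

open MeasureTheory Filter ENNReal

open Set Topology

namespace MeasureTheory

def IsMedian (ν : Measure ℝ) (m : ℝ) : Prop :=
  1 / 2 ≤ ν (Ici m) ∧ 1 / 2 ≤ ν (Iic m)

namespace IsMedian

variable {ν : Measure ℝ} {m : ℝ}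

lemma lt_of_measure_Iic_lt_half (h : IsMedian ν m) {c : ℝ} (hc : ν (Iic c) < 1 / 2) : c < m := by
  by_contra! hmc
  exact (h.2.trans (measure_mono (Iic_subset_Iic.2 hmc))).not_gt hc

lemma lt_of_measure_Ici_lt_half (h : IsMedian ν m) {C : ℝ} (hC : ν (Ici C) < 1 / 2) : m < C := by
  by_contra! hCm
  exact (h.1.trans (measure_mono (Ici_subset_Ici.2 hCm))).not_gt hC

end IsMedian

lemma isMedian_map_div_const {Ω : Type*} [MeasurableSpace Ω] {μ : Measure Ω} {X : Ω → ℝ}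
    (hX : Measurable X) {a b : ℝ} (hb : 0 < b)
    (ha : 1 / 2 ≤ μ {ω | a ≤ X ω} ∧ 1 / 2 ≤ μ {ω | X ω ≤ a}) :
    IsMedian (μ.map fun ω ↦ X ω / b) (a / b) := by
  have hY : Measurable fun ω ↦ X ω / b := hX.div_const b
  rw [IsMedian, Measure.map_apply hY measurableSet_Ici, Measure.map_apply hY measurableSet_Iic]
  simpa [preimage, div_le_div_iff_of_pos_right hb] using ha

lemma Measure.exists_gt_measure_Iic_lt {ν : Measure ℝ} [IsFiniteMeasure ν] {a : ℝ} {t : ℝ≥0∞}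
    (h : ν (Iic a) < t) : ∃ c > a, ν (Iic c) < t := by
  have hIic : ⋂ r > a, Iic r = Iic a := by
    ext x
    simpa using ⟨le_of_forall_gt_imp_ge_of_dense, fun hx r hr ↦ hx.trans hr.le⟩
  have hlim : Tendsto (ν ∘ Iic) (𝓝[>] a) (𝓝 (ν (Iic a))) := by
    rw [← hIic]
    exact tendsto_measure_biInter_gt (fun r _ ↦ measurableSet_Iic.nullMeasurableSet)
      (fun i j _ hij ↦ Iic_subset_Iic.2 hij) ⟨a + 1, lt_add_one a, measure_ne_top _ _⟩
  obtain ⟨c, hc, hac⟩ := ((hlim.eventually (gt_mem_nhds h)).and self_mem_nhdsWithin).exists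
  exact ⟨c, hac, hc⟩

lemma Measure.exists_measure_Ici_lt {ν : Measure ℝ} [IsFiniteMeasure ν] {t : ℝ≥0∞}
    (ht : 0 < t) : ∃ C, ν (Ici C) < t := by
  have hempty : ⋂ C : ℝ, Ici C = ∅ := by
    ext x
    simpa using ⟨x + 1, lt_add_one x⟩
  have hlim : Tendsto (ν ∘ Ici) atTop (𝓝 0) := by
    rw [← measure_empty (μ := ν), ← hempty]
    exact tendsto_measure_iInter_atTop (fun C ↦ measurableSet_Ici.nullMeasurableSet)
      (fun i j hij ↦ Ici_subset_Ici.2 hij) ⟨0, measure_ne_top _ _⟩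
  exact (hlim.eventually (gt_mem_nhds ht)).exists

lemma ProbabilityMeasure.eventually_measure_lt_of_tendsto {Ω ι : Type*} [MeasurableSpace Ω]
    [TopologicalSpace Ω] [OpensMeasurableSpace Ω] [HasOuterApproxClosed Ω] {L : Filter ι}
    {μs : ι → ProbabilityMeasure Ω} {μ : ProbabilityMeasure Ω} (hμ : Tendsto μs L (𝓝 μ))
    {F : Set Ω} (hF : IsClosed F) {t : ℝ≥0∞} (h : (μ : Measure Ω) F < t) :
    ∀ᶠ i in L, (μs i : Measure Ω) F < t :=
  eventually_lt_of_limsup_lt ((limsup_measure_closed_le_of_tendsto hμ hF).trans_lt h)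

theorem exists_pos_eventually_mem_Icc_of_isMedian {ι : Type*} {L : Filter ι}
    {νs : ι → ProbabilityMeasure ℝ} {ν : ProbabilityMeasure ℝ} (hν : Tendsto νs L (𝓝 ν))
    (hν0 : (ν : Measure ℝ) (Iic 0) = 0) {m : ι → ℝ} (hm : ∀ i, IsMedian (νs i) (m i)) :
    ∃ c > 0, ∃ C, ∀ᶠ i in L, m i ∈ Icc c C := by
  obtain ⟨c, hc, hνc⟩ := Measure.exists_gt_measure_Iic_lt (ν := ν) (a := 0) (t := 1 / 2)
    (by simp [hν0])
  obtain ⟨C, hνC⟩ := Measure.exists_measure_Ici_lt (ν := ν) (t := 1 / 2) (by simp)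
  refine ⟨c, hc, C, ?_⟩
  filter_upwards [ProbabilityMeasure.eventually_measure_lt_of_tendsto hν isClosed_Iic hνc,
    ProbabilityMeasure.eventually_measure_lt_of_tendsto hν isClosed_Ici hνC] with i hic hiC
  exact ⟨((hm i).lt_of_measure_Iic_lt_half hic).le, ((hm i).lt_of_measure_Ici_lt_half hiC).le⟩

lemma tendstoInDistribution_of_forall_integral_tendsto {Ω ι E : Type*} [MeasurableSpace Ω]
    {μ : Measure Ω} [IsProbabilityMeasure μ] [TopologicalSpace E] [MeasurableSpace E]
    [OpensMeasurableSpace E] {L : Filter ι} {Y : ι → Ω → E} {Z : Ω → E}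
    (hY : ∀ i, Measurable (Y i)) (hZ : Measurable Z)
    (h : ∀ f : BoundedContinuousFunction E ℝ,
      Tendsto (fun i ↦ ∫ ω, f (Y i ω) ∂μ) L (𝓝 (∫ ω, f (Z ω) ∂μ))) :
    TendstoInDistribution Y L Z (fun _ ↦ μ) μ where
  forall_aemeasurable i := (hY i).aemeasurable
  aemeasurable_limit := hZ.aemeasurable
  tendsto := by
    refine ProbabilityMeasure.tendsto_iff_forall_integral_tendsto.2 fun f ↦ ?_
    simp only [ProbabilityMeasure.coe_mk]
    rw [integral_map hZ.aemeasurable f.continuous.aestronglyMeasurable]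
    simpa only [integral_map (hY _).aemeasurable f.continuous.aestronglyMeasurable] using h f

end MeasureTheory

/-- If `X_k / b_k` converges in distribution to a random variable `X` with
`P(0 < X < ∞) = 1`, and `a_k` is a median of `X_k`, then `a_k / b_k` is bounded above and
below by positive constants for all large `k`. -/
theorem stmt17 {Ω : Type*} [MeasurableSpace Ω] (μ : Measure Ω) [IsProbabilityMeasure μ]
    (X : ℕ → Ω → ℝ) (hX : ∀ k, Measurable (X k)) (b : ℕ → ℝ) (hb : ∀ k, 0 < b k)
    (Xlim : Ω → ℝ) (hXlim : Measurable Xlim)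
    (hconv : ∀ f : BoundedContinuousFunction ℝ ℝ,
      Tendsto (fun k => ∫ ω, f (X k ω / b k) ∂μ) atTop (nhds (∫ ω, f (Xlim ω) ∂μ)))
    (hpos : ∀ᵐ ω ∂μ, 0 < Xlim ω)
    (a : ℕ → ℝ)
    (ha : ∀ k, (1 : ℝ≥0∞) / 2 ≤ μ {ω | a k ≤ X k ω} ∧
      (1 : ℝ≥0∞) / 2 ≤ μ {ω | X k ω ≤ a k}) :
    ∃ c C : ℝ, 0 < c ∧ c ≤ C ∧ ∃ k₀ : ℕ, ∀ k ≥ k₀, c ≤ a k / b k ∧ a k / b k ≤ C := by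
  have hlaw := tendstoInDistribution_of_forall_integral_tendsto
    (fun k ↦ (hX k).div_const (b k)) hXlim hconv
  have hlim0 : μ.map Xlim (Iic 0) = 0 := by
    rw [Measure.map_apply hXlim measurableSet_Iic]
    exact measure_mono_null (fun ω hω ↦ not_lt.2 hω) (ae_iff.1 hpos)
  obtain ⟨c, hc, C, hev⟩ := exists_pos_eventually_mem_Icc_of_isMedian hlaw.tendsto hlim0
    fun k ↦ isMedian_map_div_const (hX k) (hb k) (ha k)
  obtain ⟨k₀, hk₀⟩ := eventually_atTop.1 hev
  exact ⟨c, C, hc, (hk₀ k₀ le_rfl).1.trans (hk₀ k₀ le_rfl).2, k₀, hk₀⟩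
end
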